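/- arXiv:1903.08214 — 4 statements merged into one kernel-verified Lean document; each statement's English description precedes it below -/
import Mathlib

section
/- If f : {0,1}^n → {0,1} is represented by a multilinear real polynomial of degree d, then f depends on at most d·2^{d-1} variables (i.e., the number of coordinates i with Inf_i[f] > 0 is at most d·2^{d-1}). -/
open MvPolynomial Finset
open scoped Classical

/-- `bval` converts a boolean to the real number 0 or 1. -/
def bval (x : Bool) : ℝ := if x then 1 else 0

/-- `Represents P f` : `P` is the multilinear real polynomial representing the
Boolean function `f : {0,1}^n → {0,1}`. -/
def Represents {n : ℕ} (P : MvPolynomial (Fin n) ℝ) (f : (Fin n → Bool) → Bool) : Prop :=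
  (∀ m ∈ P.support, ∀ i, m i ≤ 1) ∧
  ∀ x : Fin n → Bool, MvPolynomial.eval (fun i => bval (x i)) P = bval (f x)

/-- Flip the `i`-th bit of `x`. -/
def flip1 {n : ℕ} (x : Fin n → Bool) (i : Fin n) : Fin n → Bool :=
  Function.update x i (!(x i))

/-- Coordinate `i` is relevant for `f`. -/
def Relevant {n : ℕ} (f : (Fin n → Bool) → Bool) (i : Fin n) : Prop :=
  ∃ x, f (flip1 x i) ≠ f x

/-- The set of relevant coordinates of `f`. -/
noncomputable def relSet {n : ℕ} (f : (Fin n → Bool) → Bool) : Finset (Fin n) :=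
  Finset.univ.filter fun i => Relevant f i

/-- The influence of coordinate `i` on `f`. -/
noncomputable def influence {n : ℕ} (f : (Fin n → Bool) → Bool) (i : Fin n) : ℝ :=
  ((Finset.univ.filter fun x => f (flip1 x i) ≠ f x).card : ℝ) / 2 ^ n

/-- `degI P i` : the maximal degree of a monomial of `P` containing `x i`. -/
noncomputable def degI {n : ℕ} (P : MvPolynomial (Fin n) ℝ) (i : Fin n) : ℕ :=
  (P.support.filter fun m => m i ≠ 0).sup fun m => m.sum fun _ e => e

/-- `W P f = Σ_{i ∈ R(f)} 2^{-deg_i(f)}`, computed via the representing polynomial `P`. -/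
noncomputable def W {n : ℕ} (P : MvPolynomial (Fin n) ℝ) (f : (Fin n → Bool) → Bool) : ℝ :=
  ∑ i ∈ relSet f, ((2:ℝ) ^ degI P i)⁻¹

/-- Flip the bits of `x` in the block `B`. -/
def flipB {n : ℕ} (x : Fin n → Bool) (B : Finset (Fin n)) : Fin n → Bool :=
  fun j => if j ∈ B then !(x j) else x j

/-- `f` has `b` pairwise disjoint sensitive blocks at some input. -/
def HasSensBlocks {n : ℕ} (f : (Fin n → Bool) → Bool) (b : ℕ) : Prop :=
  ∃ (x : Fin n → Bool) (B : Fin b → Finset (Fin n)),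
    (∀ j k, j ≠ k → Disjoint (B j) (B k)) ∧ ∀ j, f (flipB x (B j)) ≠ f x

/-- The block sensitivity of `f`. -/
noncomputable def bs {n : ℕ} (f : (Fin n → Bool) → Bool) : ℕ :=
  sSup {b | HasSensBlocks f b}

/-- Restriction of `f` fixing the coordinates in `H` according to `α`. -/
def restrict {n : ℕ} (f : (Fin n → Bool) → Bool) (H : Finset (Fin n)) (α : Fin n → Bool) :
    (Fin n → Bool) → Bool :=
  fun x => f fun i => if i ∈ H then α i else x i

/-- The multilinear monomial (exponent vector) with support `S`. -/
noncomputable def monOf {n : ℕ} (S : Finset (Fin n)) : Fin n →₀ ℕ :=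
  ∑ j ∈ S, Finsupp.single j 1

section NisanSzegedy

variable {n : ℕ}

private lemma bval_inj {a b : Bool} (h : bval a = bval b) : a = b := by
  cases a <;> cases b <;> simp_all [bval]

private def sgn (b : Bool) : ℝ := if b then -1 else 1

private lemma sgn_not (b : Bool) : sgn (!b) = - sgn b := by cases b <;> simp [sgn]

noncomputable def chi (S : Finset (Fin n)) (x : Fin n → Bool) : ℝ :=
  ∏ j : Fin n, if j ∈ S then sgn (x j) else 1

private lemma flip1_apply (x : Fin n → Bool) (i j : Fin n) :
    flip1 x i j = if j = i then !(x i) else x j := by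
  simp [flip1, Function.update_apply]

private lemma flip1_invol (x : Fin n → Bool) (i : Fin n) : flip1 (flip1 x i) i = x := by
  funext j
  by_cases h : j = i <;> simp [flip1_apply, h]

private lemma cube_sum_prod {R : Type*} [CommSemiring R] (g : Fin n → Bool → R) :
    ∑ x : Fin n → Bool, ∏ j : Fin n, g j (x j) = ∏ j : Fin n, (g j true + g j false) := by
  classical
  have h := Finset.prod_univ_sum (fun _ : Fin n => (Finset.univ : Finset Bool)) g
  rw [Fintype.piFinset_univ] at h
  rw [← h]
  exact Finset.prod_congr rfl fun j _ => by rw [Fintype.sum_bool]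

private lemma sum_chi_mul (S T : Finset (Fin n)) :
    ∑ x : Fin n → Bool, chi S x * chi T x = if S = T then (2:ℝ)^n else 0 := by
  classical
  have h1 : ∀ x : Fin n → Bool, chi S x * chi T x =
      ∏ j : Fin n, ((if j ∈ S then sgn (x j) else 1) * (if j ∈ T then sgn (x j) else 1)) := by
    intro x; rw [chi, chi, ← Finset.prod_mul_distrib]
  rw [Finset.sum_congr rfl fun x _ => h1 x,
    cube_sum_prod (fun j b => (if j ∈ S then sgn b else 1) * (if j ∈ T then sgn b else 1))]
  by_cases hST : S = T
  · subst hST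
    rw [if_pos rfl]
    have h2 : ∀ j ∈ (Finset.univ : Finset (Fin n)),
        ((if j ∈ S then sgn true else 1) * (if j ∈ S then sgn true else 1) +
          (if j ∈ S then sgn false else 1) * (if j ∈ S then sgn false else 1)) = (2:ℝ) := by
      intro j _; by_cases h : j ∈ S <;> simp [h, sgn] <;> norm_num
    rw [Finset.prod_congr rfl h2, Finset.prod_const]
    simp
  · rw [if_neg hST]
    have h3 : ¬ (∀ j, j ∈ S ↔ j ∈ T) := fun h => hST (Finset.ext h)
    obtain ⟨j, hj⟩ := not_forall.mp h3
    apply Finset.prod_eq_zero (Finset.mem_univ j)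
    by_cases h4 : j ∈ S
    · have h5 : j ∉ T := fun h5 => hj ⟨fun _ => h5, fun _ => h4⟩
      simp [h4, h5, sgn]
    · have h5 : j ∈ T := by
        by_contra h5
        exact hj ⟨fun h6 => absurd h6 h4, fun h6 => absurd h6 h5⟩
      simp [h4, h5, sgn]

private lemma sum_chi_chi (x y : Fin n → Bool) :
    ∑ S : Finset (Fin n), chi S x * chi S y = if x = y then (2:ℝ)^n else 0 := by
  classical
  have h1 : ∀ S : Finset (Fin n), chi S x * chi S y = ∏ j ∈ S, (sgn (x j) * sgn (y j)) := by
    intro S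
    rw [chi, chi, ← Finset.prod_mul_distrib]
    rw [Finset.prod_congr rfl (fun j _ => show
        (if j ∈ S then sgn (x j) else 1) * (if j ∈ S then sgn (y j) else 1)
          = if j ∈ S then sgn (x j) * sgn (y j) else 1 from by
        by_cases h : j ∈ S <;> simp [h]),
      Finset.prod_ite_mem, Finset.univ_inter]
  have h2 := Finset.prod_add (fun j : Fin n => sgn (x j) * sgn (y j))
    (fun _ : Fin n => (1:ℝ)) Finset.univ
  rw [Finset.powerset_univ] at h2
  simp only [Finset.prod_const_one, mul_one] at h2
  rw [Finset.sum_congr rfl fun S _ => h1 S, ← h2]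
  by_cases hxy : x = y
  · subst hxy
    rw [if_pos rfl]
    have h3 : ∀ j ∈ (Finset.univ : Finset (Fin n)), sgn (x j) * sgn (x j) + 1 = (2:ℝ) := by
      intro j _; cases h : x j <;> simp [sgn] <;> norm_num
    rw [Finset.prod_congr rfl h3, Finset.prod_const]
    simp
  · rw [if_neg hxy]
    have h3 : ∃ j, x j ≠ y j := by
      by_contra h; push_neg at h; exact hxy (funext h)
    obtain ⟨j, hj⟩ := h3
    apply Finset.prod_eq_zero (Finset.mem_univ j)
    cases h4 : x j <;> cases h5 : y j <;> simp_all [sgn]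

noncomputable def Ff (f : (Fin n → Bool) → Bool) (x : Fin n → Bool) : ℝ := bval (f x)

noncomputable def fc (f : (Fin n → Bool) → Bool) (S : Finset (Fin n)) : ℝ :=
  (∑ x : Fin n → Bool, Ff f x * chi S x) / 2 ^ n

private lemma expansion (f : (Fin n → Bool) → Bool) (x : Fin n → Bool) :
    Ff f x = ∑ S : Finset (Fin n), fc f S * chi S x := by
  classical
  have h2n : ((2:ℝ)^n) ≠ 0 := by positivity
  symm
  calc ∑ S : Finset (Fin n), fc f S * chi S x
      = (∑ S : Finset (Fin n), ∑ y : Fin n → Bool, Ff f y * (chi S y * chi S x)) / 2^n := by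
        rw [Finset.sum_div]
        refine Finset.sum_congr rfl fun S _ => ?_
        rw [fc, div_mul_eq_mul_div, Finset.sum_mul]
        congr 1
        exact Finset.sum_congr rfl fun y _ => by ring
    _ = (∑ y : Fin n → Bool, Ff f y * ∑ S : Finset (Fin n), chi S y * chi S x) / 2^n := by
        rw [Finset.sum_comm]
        congr 1
        exact Finset.sum_congr rfl fun y _ => by rw [Finset.mul_sum]
    _ = Ff f x := by
        rw [Finset.sum_congr rfl fun y _ => by rw [sum_chi_chi y x]]
        simp only [mul_ite, mul_zero]
        rw [Finset.sum_ite_eq' Finset.univ x (fun y => Ff f y * 2^n)]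
        simp [h2n, mul_div_assoc]

private lemma parsevalGen (a : Finset (Fin n) → ℝ) :
    ∑ x : Fin n → Bool, (∑ S : Finset (Fin n), a S * chi S x)^2
      = 2^n * ∑ S : Finset (Fin n), (a S)^2 := by
  classical
  have h1 : ∀ x : Fin n → Bool, (∑ S : Finset (Fin n), a S * chi S x)^2
      = ∑ S : Finset (Fin n), ∑ T : Finset (Fin n), a S * a T * (chi S x * chi T x) := by
    intro x; rw [sq, Finset.sum_mul_sum]
    exact Finset.sum_congr rfl fun S _ => Finset.sum_congr rfl fun T _ => by ring
  rw [Finset.sum_congr rfl fun x _ => h1 x, Finset.sum_comm]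
  calc ∑ S : Finset (Fin n), ∑ x : Fin n → Bool, ∑ T : Finset (Fin n),
        a S * a T * (chi S x * chi T x)
      = ∑ S : Finset (Fin n), ∑ T : Finset (Fin n), a S * a T * ∑ x : Fin n → Bool,
          chi S x * chi T x := by
        refine Finset.sum_congr rfl fun S _ => ?_
        rw [Finset.sum_comm]
        exact Finset.sum_congr rfl fun T _ => by rw [← Finset.mul_sum]
    _ = ∑ S : Finset (Fin n), (a S)^2 * 2^n := by
        refine Finset.sum_congr rfl fun S _ => ?_
        rw [Finset.sum_congr rfl fun T _ => by rw [sum_chi_mul S T]]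
        simp only [mul_ite, mul_zero]
        rw [Finset.sum_ite_eq Finset.univ S (fun T => a S * a T * 2^n)]
        simp [sq]
    _ = 2^n * ∑ S : Finset (Fin n), (a S)^2 := by
        rw [← Finset.sum_mul]; ring

private lemma parseval (f : (Fin n → Bool) → Bool) :
    ∑ S : Finset (Fin n), (fc f S)^2 = fc f ∅ := by
  classical
  have h2n : ((2:ℝ)^n) ≠ 0 := by positivity
  have h1 := parsevalGen (n := n) (fc f)
  have h2 : ∀ x : Fin n → Bool, (∑ S : Finset (Fin n), fc f S * chi S x)^2 = Ff f x := by
    intro x; rw [← expansion]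
    cases h : f x <;> simp [Ff, bval, h]
  rw [Finset.sum_congr rfl fun x _ => h2 x] at h1
  have h3 : fc f ∅ = (∑ x : Fin n → Bool, Ff f x) / 2^n := by
    rw [fc]; congr 1; exact Finset.sum_congr rfl fun x _ => by simp [chi]
  rw [h3, h1]
  field_simp

private lemma chi_flip (S : Finset (Fin n)) (x : Fin n → Bool) (i : Fin n) :
    chi S (flip1 x i) = (if i ∈ S then (-1:ℝ) else 1) * chi S x := by
  classical
  rw [chi, chi]
  rw [← Finset.mul_prod_erase Finset.univ
      (fun j => if j ∈ S then sgn (flip1 x i j) else 1) (Finset.mem_univ i),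
    ← Finset.mul_prod_erase Finset.univ
      (fun j => if j ∈ S then sgn (x j) else 1) (Finset.mem_univ i)]
  have h1 : ∀ j ∈ Finset.univ.erase i,
      (if j ∈ S then sgn (flip1 x i j) else 1) = (if j ∈ S then sgn (x j) else 1) := by
    intro j hj
    rw [show flip1 x i j = x j from by
      rw [flip1_apply, if_neg (Finset.mem_erase.mp hj).1]]
  rw [Finset.prod_congr rfl h1]
  rw [show flip1 x i i = !(x i) from by rw [flip1_apply, if_pos rfl]]
  by_cases h : i ∈ S <;> simp [h, sgn_not] <;> ring

noncomputable def Ci (f : (Fin n → Bool) → Bool) (i : Fin n) : ℕ :=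
  (Finset.univ.filter fun x => f (flip1 x i) ≠ f x).card

private lemma Ci_formula (f : (Fin n → Bool) → Bool) (i : Fin n) :
    (Ci f i : ℝ) = 2^n * ∑ S : Finset (Fin n), (if i ∈ S then 4 * (fc f S)^2 else 0) := by
  classical
  have hG : ∀ x : Fin n → Bool, Ff f (flip1 x i) - Ff f x
      = ∑ S : Finset (Fin n), (if i ∈ S then (-2) * fc f S else 0) * chi S x := by
    intro x
    rw [expansion f (flip1 x i), expansion f x, ← Finset.sum_sub_distrib]
    refine Finset.sum_congr rfl fun S _ => ?_
    rw [chi_flip]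
    by_cases h : i ∈ S <;> simp [h] <;> ring
  have hsq : ∀ x : Fin n → Bool,
      (if f (flip1 x i) ≠ f x then (1:ℝ) else 0) = (Ff f (flip1 x i) - Ff f x)^2 := by
    intro x
    cases h1 : f (flip1 x i) <;> cases h2 : f x <;> simp [Ff, bval, h1, h2] <;> norm_num
  have hcast : (Ci f i : ℝ)
      = ∑ x : Fin n → Bool, (if f (flip1 x i) ≠ f x then (1:ℝ) else 0) := by
    rw [Finset.sum_boole]
    simp [Ci]
  rw [hcast, Finset.sum_congr rfl fun x _ => hsq x,
    Finset.sum_congr rfl fun x _ => by rw [hG x], parsevalGen]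
  congr 1
  refine Finset.sum_congr rfl fun S _ => ?_
  by_cases h : i ∈ S <;> simp [h] <;> ring

private lemma card_support_le_sum (m : Fin n →₀ ℕ) :
    m.support.card ≤ m.sum fun _ e => e := by
  rw [Finsupp.sum]
  calc m.support.card = ∑ _j ∈ m.support, 1 := by simp
    _ ≤ ∑ j ∈ m.support, m j := Finset.sum_le_sum fun j hj =>
        Nat.one_le_iff_ne_zero.mpr (Finsupp.mem_support_iff.mp hj)

private lemma fc_eq_zero {f : (Fin n → Bool) → Bool} {P : MvPolynomial (Fin n) ℝ}
    (hP : Represents P f) {S : Finset (Fin n)} (hS : P.totalDegree < S.card) : fc f S = 0 := by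
  classical
  rw [fc, div_eq_zero_iff]; left
  have hFf : ∀ x : Fin n → Bool, Ff f x
      = ∑ m ∈ P.support, MvPolynomial.coeff m P * ∏ j : Fin n, bval (x j) ^ m j := by
    intro x; rw [Ff, ← hP.2 x, MvPolynomial.eval_eq']
  calc ∑ x : Fin n → Bool, Ff f x * chi S x
      = ∑ x : Fin n → Bool, ∑ m ∈ P.support, MvPolynomial.coeff m P *
          ∏ j : Fin n, (bval (x j) ^ m j * (if j ∈ S then sgn (x j) else 1)) := by
        refine Finset.sum_congr rfl fun x _ => ?_
        rw [hFf x, Finset.sum_mul]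
        refine Finset.sum_congr rfl fun m _ => ?_
        rw [chi, mul_assoc, ← Finset.prod_mul_distrib]
    _ = ∑ m ∈ P.support, MvPolynomial.coeff m P *
          ∏ j : Fin n, ((bval true ^ m j * (if j ∈ S then sgn true else 1))
            + (bval false ^ m j * (if j ∈ S then sgn false else 1))) := by
        rw [Finset.sum_comm]
        refine Finset.sum_congr rfl fun m _ => ?_
        rw [← Finset.mul_sum,
          cube_sum_prod (fun j b => bval b ^ m j * (if j ∈ S then sgn b else 1))]
    _ = 0 := by
        refine Finset.sum_eq_zero fun m hm => ?_
        have hcard : m.support.card ≤ P.totalDegree :=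
          le_trans (card_support_le_sum m) (MvPolynomial.le_totalDegree hm)
        have hnsub : ¬ S ⊆ m.support := fun hsub => by
          have := Finset.card_le_card hsub; omega
        obtain ⟨j, hjS, hjm⟩ := Finset.not_subset.mp hnsub
        have hmj : m j = 0 := Finsupp.notMem_support_iff.mp hjm
        rw [Finset.prod_eq_zero (Finset.mem_univ j)
          (by simp [hmj, hjS, bval, sgn]), mul_zero]

private lemma total_bound {f : (Fin n → Bool) → Bool} {P : MvPolynomial (Fin n) ℝ}
    (hP : Represents P f) :
    ∑ i : Fin n, (Ci f i : ℝ) ≤ P.totalDegree * 2^n := by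
  classical
  set d := P.totalDegree with hd
  have h2n : (0:ℝ) < 2^n := by positivity
  calc ∑ i : Fin n, (Ci f i : ℝ)
      = 2^n * ∑ i : Fin n, ∑ S : Finset (Fin n), (if i ∈ S then 4 * (fc f S)^2 else 0) := by
        rw [Finset.mul_sum]; exact Finset.sum_congr rfl fun i _ => Ci_formula f i
    _ = 2^n * ∑ S : Finset (Fin n), (S.card : ℝ) * (4 * (fc f S)^2) := by
        congr 1; rw [Finset.sum_comm]
        refine Finset.sum_congr rfl fun S _ => ?_
        rw [Finset.sum_ite_mem, Finset.univ_inter, Finset.sum_const, nsmul_eq_mul]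
    _ ≤ 2^n * ∑ S : Finset (Fin n), (d:ℝ) * (if S = ∅ then 0 else 4 * (fc f S)^2) := by
        apply mul_le_mul_of_nonneg_left _ (le_of_lt h2n)
        apply Finset.sum_le_sum
        intro S _
        by_cases hS0 : S = ∅
        · subst hS0; simp
        by_cases hSd : S.card ≤ d
        · rw [if_neg hS0]
          apply mul_le_mul_of_nonneg_right _ (by positivity)
          exact_mod_cast hSd
        · rw [fc_eq_zero hP (by omega)]
          simp
    _ = 2^n * ((d:ℝ) * (4 * (fc f ∅ - (fc f ∅)^2))) := by
        congr 1
        rw [← Finset.mul_sum]; congr 1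
        have h5 : ∀ S : Finset (Fin n), (if S = ∅ then (0:ℝ) else 4 * (fc f S)^2)
            = 4 * (fc f S)^2 - (if S = ∅ then 4 * (fc f S)^2 else 0) := by
          intro S; by_cases h : S = ∅ <;> simp [h]
        rw [Finset.sum_congr rfl fun S _ => h5 S, Finset.sum_sub_distrib,
          Finset.sum_ite_eq' Finset.univ (∅ : Finset (Fin n)) (fun S => 4 * (fc f S)^2)]
        simp only [Finset.mem_univ, if_pos]
        rw [show (∑ S : Finset (Fin n), 4 * (fc f S)^2)
            = 4 * ∑ S : Finset (Fin n), (fc f S)^2 from (Finset.mul_sum _ _ _).symm, parseval]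
        ring
    _ ≤ 2^n * ((d:ℝ) * 1) := by
        apply mul_le_mul_of_nonneg_left _ (le_of_lt h2n)
        apply mul_le_mul_of_nonneg_left _ (Nat.cast_nonneg d)
        nlinarith [sq_nonneg (2 * fc f ∅ - 1)]
    _ = (d:ℝ) * 2^n := by ring

end NisanSzegedy

section NisanSzegedy2

variable {n : ℕ}

private lemma relevant_mon {f : (Fin n → Bool) → Bool} {P : MvPolynomial (Fin n) ℝ}
    (hP : Represents P f) {i : Fin n} (hrel : Relevant f i) :
    ∃ m ∈ P.support, m i ≠ 0 := by
  classical
  by_contra hcon; push_neg at hcon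
  obtain ⟨x, hx⟩ := hrel
  apply hx
  apply bval_inj
  rw [← hP.2, ← hP.2, MvPolynomial.eval_eq', MvPolynomial.eval_eq']
  refine Finset.sum_congr rfl fun m hm => ?_
  congr 1
  refine Finset.prod_congr rfl fun j _ => ?_
  by_cases hj : j = i
  · subst hj; rw [hcon m hm]; simp
  · rw [flip1_apply, if_neg hj]

private lemma mono_eq {P : MvPolynomial (Fin n) ℝ} (h1 : ∀ m ∈ P.support, ∀ i, m i ≤ 1)
    {m m' : Fin n →₀ ℕ} (hm : m ∈ P.support) (hm' : m' ∈ P.support)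
    (hs : m.support = m'.support) : m = m' := by
  ext j
  have a1 := h1 m hm j
  have a2 := h1 m' hm' j
  by_cases hj : j ∈ m.support
  · have b1 : m j ≠ 0 := Finsupp.mem_support_iff.mp hj
    have b2 : m' j ≠ 0 := Finsupp.mem_support_iff.mp (hs ▸ hj)
    omega
  · have b1 : m j = 0 := Finsupp.notMem_support_iff.mp hj
    have b2 : m' j = 0 := Finsupp.notMem_support_iff.mp (by rw [← hs]; exact hj)
    omega

private lemma prod_one_two {R : Type*} [CommSemiring R] (E : Finset (Fin n)) :
    (∏ j : Fin n, (if j ∈ E then (1:R) else 2)) = 2 ^ (n - E.card) := by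
  classical
  rw [Finset.prod_ite]
  rw [Finset.prod_const, Finset.prod_const, one_pow, one_mul]
  congr 1
  have h : (Finset.univ.filter fun j => j ∉ E) = Eᶜ := by
    ext j; simp
  rw [h, Finset.card_compl, Fintype.card_fin]

private lemma subcube_sens {f : (Fin n → Bool) → Bool} {P : MvPolynomial (Fin n) ℝ}
    (hP : Represents P f) {i : Fin n} {m : Fin n →₀ ℕ}
    (hm : m ∈ P.support) (hmi : m i ≠ 0)
    (hmax : ∀ m' ∈ P.support, m' i ≠ 0 → m'.support.card ≤ m.support.card)
    (z : Fin n → Bool) :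
    ∃ x : Fin n → Bool, (∀ j, j ∉ m.support → x j = z j) ∧ f (flip1 x i) ≠ f x := by
  classical
  by_contra hcon; push_neg at hcon
  set S := m.support with hSdef
  have hiS : i ∈ S := Finsupp.mem_support_iff.mpr hmi
  set sg1 : Bool → ℝ := fun b => if b then (1:ℝ) else -1 with hsg1
  set p : (Fin n → Bool) → (Fin n → Bool) := fun v j => if j ∈ S then v j else z j with hpdef
  have hpz : ∀ v : Fin n → Bool, ∀ j, j ∉ S → p v j = z j := fun v j hj => if_neg hj
  have hfac : ∀ (m' : Fin n →₀ ℕ) (j : Fin n),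
      ((if j ∈ S then sg1 true else 1) * bval (if j ∈ S then true else z j) ^ m' j)
        + ((if j ∈ S then sg1 false else 1) * bval (if j ∈ S then false else z j) ^ m' j)
      = if j ∈ S then (if m' j = 0 then 0 else 1) else 2 * bval (z j) ^ m' j := by
    intro m' j
    by_cases hj : j ∈ S
    · by_cases h0 : m' j = 0
      · simp [hj, h0, hsg1, bval]
      · simp [hj, h0, hsg1, bval, zero_pow h0]
    · simp [hj]; ring
  have key : ∑ v : Fin n → Bool, (∏ j ∈ S, sg1 (v j)) * Ff f (p v)
      = MvPolynomial.coeff m P * 2 ^ (n - S.card) := by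
    have hFf : ∀ v : Fin n → Bool, Ff f (p v)
        = ∑ m' ∈ P.support, MvPolynomial.coeff m' P * ∏ j : Fin n, bval (p v j) ^ m' j :=
      fun v => by rw [Ff, ← hP.2, MvPolynomial.eval_eq']
    calc ∑ v : Fin n → Bool, (∏ j ∈ S, sg1 (v j)) * Ff f (p v)
        = ∑ v : Fin n → Bool, ∑ m' ∈ P.support, MvPolynomial.coeff m' P *
            ∏ j : Fin n, ((if j ∈ S then sg1 (v j) else 1)
              * bval (if j ∈ S then v j else z j) ^ m' j) := by
          refine Finset.sum_congr rfl fun v _ => ?_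
          rw [hFf v, Finset.mul_sum]
          refine Finset.sum_congr rfl fun m' _ => ?_
          rw [Finset.prod_mul_distrib, Finset.prod_ite_mem, Finset.univ_inter]
          have hb : (∏ j : Fin n, bval (if j ∈ S then v j else z j) ^ m' j)
              = ∏ j : Fin n, bval (p v j) ^ m' j := rfl
          rw [hb]
          ring
      _ = ∑ m' ∈ P.support, MvPolynomial.coeff m' P *
            ∏ j : Fin n, (((if j ∈ S then sg1 true else 1)
                * bval (if j ∈ S then true else z j) ^ m' j)
              + ((if j ∈ S then sg1 false else 1)
                * bval (if j ∈ S then false else z j) ^ m' j)) := by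
          rw [Finset.sum_comm]
          refine Finset.sum_congr rfl fun m' _ => ?_
          rw [← Finset.mul_sum,
            cube_sum_prod (fun j b => (if j ∈ S then sg1 b else 1)
              * bval (if j ∈ S then b else z j) ^ m' j)]
      _ = MvPolynomial.coeff m P * 2 ^ (n - S.card) := by
          rw [Finset.sum_congr rfl fun m' _ =>
            by rw [Finset.prod_congr rfl fun j _ => hfac m' j]]
          rw [Finset.sum_eq_single_of_mem m hm]
          · congr 1
            rw [show (∏ j : Fin n, (if j ∈ S then (if m j = 0 then (0:ℝ) else 1)
                else 2 * bval (z j) ^ m j))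
              = ∏ j : Fin n, (if j ∈ S then (1:ℝ) else 2) from
              Finset.prod_congr rfl fun j _ => by
                by_cases hj : j ∈ S
                · have : m j ≠ 0 := Finsupp.mem_support_iff.mp (hSdef ▸ hj)
                  simp [hj, this]
                · have : m j = 0 := Finsupp.notMem_support_iff.mp (hSdef ▸ hj)
                  simp [hj, this, bval]]
            exact prod_one_two S
          · intro m' hm' hne
            by_cases hall : ∀ j ∈ S, m' j ≠ 0
            · exfalso
              have hsub : S ⊆ m'.support := fun j hj => Finsupp.mem_support_iff.mpr (hall j hj)
              have hle : m'.support.card ≤ S.card := hmax m' hm' (hall i hiS)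
              have heq : m'.support = S :=
                (Finset.eq_of_subset_of_card_le hsub hle).symm
              exact hne (mono_eq hP.1 hm' hm (heq.trans hSdef))
            · push_neg at hall
              obtain ⟨j, hjS, hj0⟩ := hall
              rw [Finset.prod_eq_zero (Finset.mem_univ j) (by simp [hjS, hj0]), mul_zero]
  have hbij : Function.Bijective (fun v : Fin n → Bool => flip1 v i) :=
    Function.Involutive.bijective (fun v => flip1_invol v i)
  have hflip : ∀ v : Fin n → Bool,
      (∏ j ∈ S, sg1 (flip1 v i j)) * Ff f (p (flip1 v i))
        = - ((∏ j ∈ S, sg1 (v j)) * Ff f (p v)) := by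
    intro v
    have h1 : p (flip1 v i) = flip1 (p v) i := by
      funext j
      by_cases hj : j = i
      · subst hj; simp [hpdef, flip1_apply, hiS]
      · simp [hpdef, flip1_apply, hj]
    have h2 : Ff f (p (flip1 v i)) = Ff f (p v) := by
      rw [h1, Ff, Ff, hcon (p v) (hpz v)]
    have h3 : (∏ j ∈ S, sg1 (flip1 v i j)) = - ∏ j ∈ S, sg1 (v j) := by
      rw [← Finset.mul_prod_erase S (fun j => sg1 (flip1 v i j)) hiS,
        ← Finset.mul_prod_erase S (fun j => sg1 (v j)) hiS]
      have h4 : ∀ j ∈ S.erase i, sg1 (flip1 v i j) = sg1 (v j) := fun j hj => by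
        rw [flip1_apply, if_neg (Finset.mem_erase.mp hj).1]
      rw [Finset.prod_congr rfl h4]
      rw [show flip1 v i i = !(v i) from by rw [flip1_apply, if_pos rfl]]
      have h5 : sg1 (!(v i)) = - sg1 (v i) := by cases h : v i <;> simp [hsg1, h]
      rw [h5]; ring
    rw [h2, h3]; ring
  have e1 : ∑ v : Fin n → Bool, (∏ j ∈ S, sg1 (flip1 v i j)) * Ff f (p (flip1 v i))
      = ∑ v : Fin n → Bool, (∏ j ∈ S, sg1 (v j)) * Ff f (p v) :=
    Fintype.sum_bijective _ hbij _ _ (fun v => rfl)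
  have e2 : ∑ v : Fin n → Bool, (∏ j ∈ S, sg1 (flip1 v i j)) * Ff f (p (flip1 v i))
      = - ∑ v : Fin n → Bool, (∏ j ∈ S, sg1 (v j)) * Ff f (p v) := by
    rw [← Finset.sum_neg_distrib]
    exact Finset.sum_congr rfl fun v _ => hflip v
  have h0 : ∑ v : Fin n → Bool, (∏ j ∈ S, sg1 (v j)) * Ff f (p v) = 0 := by
    have := e1.symm.trans e2
    linarith
  rw [h0] at key
  have hc : MvPolynomial.coeff m P ≠ 0 := MvPolynomial.mem_support_iff.mp hm
  have : MvPolynomial.coeff m P * 2 ^ (n - S.card) ≠ 0 :=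
    mul_ne_zero hc (by positivity)
  exact this key.symm

private lemma card_false_on (E : Finset (Fin n)) :
    (Finset.univ.filter fun t : Fin n → Bool => ∀ j ∈ E, t j = false).card
      = 2 ^ (n - E.card) := by
  classical
  have h1 : ((Finset.univ.filter fun t : Fin n → Bool => ∀ j ∈ E, t j = false).card : ℕ)
      = ∑ t : Fin n → Bool, (if ∀ j ∈ E, t j = false then 1 else 0) := by
    rw [Finset.sum_boole]; simp
  have h2 : ∀ t : Fin n → Bool, (if ∀ j ∈ E, t j = false then (1:ℕ) else 0)
      = ∏ j : Fin n, (if j ∈ E then (if t j = false then 1 else 0) else 1) := by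
    intro t
    by_cases h : ∀ j ∈ E, t j = false
    · rw [if_pos h]
      symm; apply Finset.prod_eq_one; intro j _
      by_cases hj : j ∈ E
      · simp [hj, h j hj]
      · simp [hj]
    · rw [if_neg h]; push_neg at h
      obtain ⟨j, hjE, hjt⟩ := h
      symm; apply Finset.prod_eq_zero (Finset.mem_univ j)
      simp [hjE, hjt]
  rw [h1, Finset.sum_congr rfl fun t _ => h2 t,
    cube_sum_prod (fun j b => if j ∈ E then (if b = false then (1:ℕ) else 0) else 1)]
  rw [Finset.prod_congr rfl (fun j _ => show
      ((if j ∈ E then (if (true:Bool) = false then (1:ℕ) else 0) else 1)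
        + (if j ∈ E then (if (false:Bool) = false then (1:ℕ) else 0) else 1))
      = if j ∈ E then 1 else 2 from by by_cases hj : j ∈ E <;> simp [hj])]
  exact prod_one_two E

private lemma count_lower {f : (Fin n → Bool) → Bool} {P : MvPolynomial (Fin n) ℝ}
    (hP : Represents P f) {d : ℕ} (hd : P.totalDegree = d) {i : Fin n}
    (hrel : Relevant f i) :
    2 ^ (n + 1) ≤ 2 ^ d * Ci f i := by
  classical
  obtain ⟨m0, hm0, hm0i⟩ := relevant_mon hP hrel
  have hne : (P.support.filter fun m => m i ≠ 0).Nonempty :=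
    ⟨m0, Finset.mem_filter.mpr ⟨hm0, hm0i⟩⟩
  obtain ⟨m, hmT, hmax'⟩ := Finset.exists_max_image _ (fun m : Fin n →₀ ℕ => m.support.card) hne
  obtain ⟨hm, hmi⟩ := Finset.mem_filter.mp hmT
  have hmax : ∀ m' ∈ P.support, m' i ≠ 0 → m'.support.card ≤ m.support.card :=
    fun m' h1 h2 => hmax' m' (Finset.mem_filter.mpr ⟨h1, h2⟩)
  set S := m.support with hS
  have hiS : i ∈ S := Finsupp.mem_support_iff.mpr hmi
  have hcard_d : S.card ≤ d := by
    rw [← hd]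
    exact le_trans (card_support_le_sum m) (MvPolynomial.le_totalDegree hm)
  have hcard_n : S.card ≤ n := le_trans (Finset.card_le_univ S) (by simp)
  have hS1 : 1 ≤ S.card := Finset.card_pos.mpr ⟨i, hiS⟩
  set ρ : (Fin n → Bool) → (Fin n → Bool) :=
    fun x j => if j ∈ S.erase i then false else x j with hρ
  have hρapp : ∀ (x : Fin n → Bool) (j : Fin n),
      ρ x j = if j ∈ S.erase i then false else x j := fun x j => rfl
  have himg : Finset.image ρ Finset.univ ⊆
      Finset.image ρ (Finset.univ.filter fun x => f (flip1 x i) ≠ f x) := by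
    intro t ht
    obtain ⟨z, _, rfl⟩ := Finset.mem_image.mp ht
    obtain ⟨x, hagree, hsens⟩ := subcube_sens hP hm hmi hmax z
    by_cases hxi : x i = z i
    · refine Finset.mem_image.mpr ⟨x, Finset.mem_filter.mpr ⟨Finset.mem_univ x, hsens⟩, ?_⟩
      funext j
      by_cases hj : j ∈ S.erase i
      · rw [hρapp, hρapp, if_pos hj, if_pos hj]
      · rw [hρapp, hρapp, if_neg hj, if_neg hj]
        rcases em (j = i) with h | h
        · subst h; exact hxi
        · have hjS : j ∉ S := fun hjS => hj (Finset.mem_erase.mpr ⟨h, hjS⟩)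
          exact hagree j hjS
    · refine Finset.mem_image.mpr ⟨flip1 x i,
        Finset.mem_filter.mpr ⟨Finset.mem_univ _, ?_⟩, ?_⟩
      · rw [flip1_invol]; exact fun h => hsens h.symm
      · funext j
        by_cases hj : j ∈ S.erase i
        · rw [hρapp, hρapp, if_pos hj, if_pos hj]
        · rw [hρapp, hρapp, if_neg hj, if_neg hj]
          rcases em (j = i) with h | h
          · subst h
            rw [flip1_apply, if_pos rfl]
            cases h4 : x j <;> cases h5 : z j <;> simp_all
          · have hjS : j ∉ S := fun hjS => hj (Finset.mem_erase.mpr ⟨h, hjS⟩)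
            rw [flip1_apply, if_neg h]
            exact hagree j hjS
  have himg2 : Finset.image ρ Finset.univ
      = (Finset.univ.filter fun t : Fin n → Bool => ∀ j ∈ S.erase i, t j = false) := by
    ext t
    constructor
    · intro ht
      obtain ⟨z, _, rfl⟩ := Finset.mem_image.mp ht
      exact Finset.mem_filter.mpr ⟨Finset.mem_univ _, fun j hj => by
        rw [hρapp, if_pos hj]⟩
    · intro ht
      refine Finset.mem_image.mpr ⟨t, Finset.mem_univ _, ?_⟩
      funext j
      by_cases hj : j ∈ S.erase i
      · rw [hρapp, if_pos hj, (Finset.mem_filter.mp ht).2 j hj]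
      · rw [hρapp, if_neg hj]
  have hcount : 2 ^ (n - (S.card - 1)) ≤ Ci f i := by
    have e1 : (Finset.image ρ Finset.univ).card = 2 ^ (n - (S.card - 1)) := by
      rw [himg2, card_false_on, Finset.card_erase_of_mem hiS]
    calc 2 ^ (n - (S.card - 1)) = (Finset.image ρ Finset.univ).card := e1.symm
      _ ≤ (Finset.image ρ (Finset.univ.filter fun x => f (flip1 x i) ≠ f x)).card :=
          Finset.card_le_card himg
      _ ≤ (Finset.univ.filter fun x => f (flip1 x i) ≠ f x).card := Finset.card_image_le
      _ = Ci f i := rfl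
  calc 2 ^ (n + 1) ≤ 2 ^ (d + (n - (S.card - 1))) :=
        Nat.pow_le_pow_right (by norm_num) (by omega)
    _ = 2 ^ d * 2 ^ (n - (S.card - 1)) := pow_add 2 _ _
    _ ≤ 2 ^ d * Ci f i := Nat.mul_le_mul_left _ hcount

end NisanSzegedy2

/-- Nisan–Szegedy: a Boolean function of degree `d` has at most
`d·2^{d-1}` relevant variables. -/
theorem stmt_0 {n : ℕ} (f : (Fin n → Bool) → Bool) (P : MvPolynomial (Fin n) ℝ)
    (hP : Represents P f) (d : ℕ) (hd : P.totalDegree = d) :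
    (relSet f).card ≤ d * 2 ^ (d - 1) := by
  classical
  rcases Finset.eq_empty_or_nonempty (relSet f) with h | h
  · simp [h]
  obtain ⟨i0, hi0⟩ := h
  have hrel0 : Relevant f i0 := by
    rw [relSet, Finset.mem_filter] at hi0
    exact hi0.2
  have hd1 : 1 ≤ d := by
    obtain ⟨m0, hm0, hm0i⟩ := relevant_mon hP hrel0
    have h1 : m0 i0 ≤ m0.sum fun _ e => e := by
      rw [Finsupp.sum]
      exact Finset.single_le_sum (f := fun j => m0 j) (fun j _ => Nat.zero_le _)
        (Finsupp.mem_support_iff.mpr hm0i)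
    have h2 := MvPolynomial.le_totalDegree hm0
    omega
  have key : ∀ i ∈ relSet f, 2 ^ (n + 1) ≤ 2 ^ d * Ci f i := by
    intro i hi
    rw [relSet, Finset.mem_filter] at hi
    exact count_lower hP hd hi.2
  have s1 : (relSet f).card * 2 ^ (n + 1) ≤ ∑ i ∈ relSet f, 2 ^ d * Ci f i := by
    calc (relSet f).card * 2 ^ (n + 1) = ∑ _i ∈ relSet f, 2 ^ (n + 1) := by
          rw [Finset.sum_const, smul_eq_mul]
      _ ≤ _ := Finset.sum_le_sum key
  have s2 : ∑ i ∈ relSet f, 2 ^ d * Ci f i = 2 ^ d * ∑ i ∈ relSet f, Ci f i :=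
    (Finset.mul_sum _ _ _).symm
  have s3 : ∑ i ∈ relSet f, Ci f i ≤ ∑ i : Fin n, Ci f i :=
    Finset.sum_le_sum_of_subset (Finset.subset_univ _)
  have s4 : ∑ i : Fin n, Ci f i ≤ d * 2 ^ n := by
    have h := total_bound hP
    rw [hd] at h
    exact_mod_cast h
  have main : (relSet f).card * 2 ^ (n + 1) ≤ 2 ^ d * (d * 2 ^ n) :=
    le_trans s1 (by rw [s2]; exact Nat.mul_le_mul_left _ (le_trans s3 s4))
  have h2 : (relSet f).card * 2 ≤ d * 2 ^ d := by
    have h3 : (relSet f).card * 2 * 2 ^ n ≤ d * 2 ^ d * 2 ^ n := by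
      calc (relSet f).card * 2 * 2 ^ n = (relSet f).card * 2 ^ (n + 1) := by ring
        _ ≤ 2 ^ d * (d * 2 ^ n) := main
        _ = d * 2 ^ d * 2 ^ n := by ring
    exact Nat.le_of_mul_le_mul_right h3 (by positivity)
  have h4 : d * 2 ^ d = d * 2 ^ (d - 1) * 2 := by
    have : 2 ^ d = 2 ^ (d - 1) * 2 := by
      rw [← pow_succ]
      congr 1
      omega
    rw [this]; ring
  rw [h4] at h2
  exact Nat.le_of_mul_le_mul_right h2 (by norm_num)
end

section
/- Let f : {0,1}^n → {0,1}, and let H ⊆ [n] be a set of coordinates with deg_i(f) = deg(f) = d for all i ∈ H. Then W(f) ≤ |H|·2^{−d} + 2^{−|H|} Σ_{α : H → {0,1}} W(f_α), where f_α is the restriction of f setting x_h = α(h) for h ∈ H. -/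
open MvPolynomial Finset
open scoped Classical

/-- Extend an assignment on `H` to all coordinates (by `false` off `H`). -/
noncomputable def extendH {n : ℕ} (H : Finset (Fin n)) (α : {i // i ∈ H} → Bool) :
    Fin n → Bool :=
  fun i => if h : i ∈ H then α ⟨i, h⟩ else false

/-! Each coordinate of `H` contributes at most `2^(-d)`. For the coordinates outside `H`, fix the
coordinates of `H` one at a time. Substituting `x h := 0` and `x h := 1` in the multilinear
representation `P` gives representations `P₀`, `P₁` of the two restrictions, and for `i ≠ h` the
weight `w k = 2^(-k)` (with `w 0 = 0`) satisfies `2 w(deg_i P) ≤ w(deg_i P₀) + w(deg_i P₁)`: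
degrees can only drop, and if `x i` disappears from one restriction, its degree in the other is
smaller than in `P`. Averaging over the `2^|H|` assignments gives the bound. -/

section Multilinear

variable {σ R : Type*}

def IsMultilinear [CommSemiring R] (P : MvPolynomial σ R) : Prop :=
  ∀ m ∈ P.support, ∀ i, m i ≤ 1

theorem IsMultilinear.sub [CommRing R] {P Q : MvPolynomial σ R} (hP : IsMultilinear P)
    (hQ : IsMultilinear Q) : IsMultilinear (P - Q) := fun m hm i =>
  (Finset.mem_union.mp (support_sub σ P Q hm)).elim (hP m · i) (hQ m · i)

theorem IsMultilinear.eq_zero_of_eval_bool {n : ℕ} {P : MvPolynomial (Fin n) ℝ}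
    (hP : IsMultilinear P) (h0 : ∀ x : Fin n → Bool, eval (fun i => bval (x i)) P = 0) :
    P = 0 := by
  refine eq_zero_of_eval_zero_at_prod_finset P (fun _ => {0, 1}) (fun i => ?_) fun x hx => ?_
  · rw [Finset.card_pair zero_ne_one, Nat.lt_succ_iff, degreeOf_le_iff]
    exact fun m hm => hP m hm i
  · have hx : x = fun i => bval (x i = 1) := funext fun i => by
      rcases Finset.mem_insert.mp (hx i) with h | h <;> simp_all [bval]
    rw [hx]
    exact h0 _

theorem IsMultilinear.eq_of_eval_bool_eq {n : ℕ} {P Q : MvPolynomial (Fin n) ℝ}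
    (hP : IsMultilinear P) (hQ : IsMultilinear Q)
    (h : ∀ x : Fin n → Bool, eval (fun i => bval (x i)) P = eval (fun i => bval (x i)) Q) :
    P = Q :=
  sub_eq_zero.mp <| (hP.sub hQ).eq_zero_of_eval_bool fun x => by rw [map_sub, h, sub_self]

variable [CommSemiring R]

noncomputable def setVar (h : σ) (c : R) (P : MvPolynomial σ R) : MvPolynomial σ R :=
  ∑ m ∈ P.support, monomial (m.erase h) (c ^ m h * P.coeff m)

theorem eval_update_monomial [DecidableEq σ] (x : σ → R) (h : σ) (c : R) (m : σ →₀ ℕ) (a : R) :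
    eval (Function.update x h c) (monomial m a) = c ^ m h * eval x (monomial (m.erase h) a) := by
  simp only [eval_monomial]
  rw [← Finsupp.mul_prod_erase' m h _ (fun _ => pow_zero _), Function.update_self,
    Finsupp.prod_congr fun j hj => by
      rw [Function.update_of_ne (by rintro rfl; simp at hj)]]
  ring

theorem eval_setVar [DecidableEq σ] (x : σ → R) (h : σ) (c : R) (P : MvPolynomial σ R) :
    eval x (setVar h c P) = eval (Function.update x h c) P := by
  conv_rhs => rw [P.as_sum]
  simp only [setVar, map_sum, eval_update_monomial]
  refine Finset.sum_congr rfl fun m _ => by simp only [eval_monomial]; ring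

theorem exists_erase_eq_of_mem_support_setVar {h : σ} {c : R} {P : MvPolynomial σ R}
    {m : σ →₀ ℕ} (hm : m ∈ (setVar h c P).support) : ∃ m' ∈ P.support, m'.erase h = m := by
  obtain ⟨m', hm', hm⟩ := Finset.mem_biUnion.mp (support_sum hm)
  exact ⟨m', hm', (Finset.mem_singleton.mp (support_monomial_subset hm)).symm⟩

theorem setVar_eq_self {h : σ} (c : R) {P : MvPolynomial σ R} (hP : ∀ m ∈ P.support, m h = 0) :
    setVar h c P = P := by
  conv_rhs => rw [P.as_sum]
  refine Finset.sum_congr rfl fun m hm => ?_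
  rw [hP m hm, pow_zero, one_mul, Finsupp.erase_of_notMem_support (by simp [hP m hm])]

theorem isMultilinear_setVar {P : MvPolynomial σ R} (hP : IsMultilinear P) (h : σ) (c : R) :
    IsMultilinear (setVar h c P) := by
  intro m hm i
  obtain ⟨m', hm', rfl⟩ := exists_erase_eq_of_mem_support_setVar hm
  rw [Finsupp.erase_apply]
  split_ifs
  exacts [zero_le_one, hP m' hm' i]

theorem IsMultilinear.coeff_setVar {P : MvPolynomial σ R} (hP : IsMultilinear P) (h : σ) (c : R)
    {m : σ →₀ ℕ} (hm : m h = 0) :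
    (setVar h c P).coeff m = P.coeff m + c * P.coeff (m + Finsupp.single h 1) := by
  have hne : m ≠ m + Finsupp.single h 1 := fun he => by simpa [hm] using congr($he h)
  have hpair : ∀ m' ∈ P.support, m'.erase h = m ↔ m' = m ∨ m' = m + Finsupp.single h 1 := by
    intro m' hm'
    constructor
    · rintro rfl
      have hsplit := Finsupp.erase_add_single h m'
      rcases Nat.le_one_iff_eq_zero_or_eq_one.mp (hP m' hm' h) with h0 | h1
      · left; simp [h0]
      · right; simpa [h1] using hsplit.symm
    · rintro (rfl | rfl)
      · exact Finsupp.erase_of_notMem_support (by simpa using hm)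
      · simp [Finsupp.erase_of_notMem_support (by simpa using hm : h ∉ m.support)]
  simp only [_root_.setVar, coeff_sum, coeff_monomial]
  rw [← Finset.sum_filter, Finset.sum_subset (s₂ := {m, m + Finsupp.single h 1}),
    Finset.sum_pair hne]
  · simp [hm]
  · intro m' hm'
    rw [Finset.mem_filter] at hm'
    simpa using (hpair m' hm'.1).mp hm'.2
  · intro m' hpm hm'
    by_contra hc
    exact hm' (Finset.mem_filter.mpr ⟨mem_support_iff.mpr (right_ne_zero_of_mul hc),
      (hpair m' (mem_support_iff.mpr (right_ne_zero_of_mul hc))).mpr (by simpa using hpm)⟩)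

end Multilinear

section DegI

variable {n : ℕ}

theorem degI_le_iff {P : MvPolynomial (Fin n) ℝ} {i : Fin n} {k : ℕ} :
    degI P i ≤ k ↔ ∀ m ∈ P.support, m i ≠ 0 → m.degree ≤ k := by
  simp only [degI, Finset.sup_le_iff, Finset.mem_filter, and_imp]
  rfl

theorem degree_le_degI {P : MvPolynomial (Fin n) ℝ} {i : Fin n} {m : Fin n →₀ ℕ}
    (hm : m ∈ P.support) (hmi : m i ≠ 0) : m.degree ≤ degI P i :=
  degI_le_iff.mp le_rfl m hm hmi

theorem degI_eq_zero_iff {P : MvPolynomial (Fin n) ℝ} {i : Fin n} :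
    degI P i = 0 ↔ ∀ m ∈ P.support, m i = 0 := by
  rw [← Nat.le_zero, degI_le_iff]
  refine forall₂_congr fun m _ => ⟨fun h => not_not.mp fun hmi => ?_, fun h hmi => absurd h hmi⟩
  have := Finsupp.le_degree i m
  omega

theorem degI_setVar_le {P : MvPolynomial (Fin n) ℝ} {h i : Fin n} (hih : i ≠ h) (c : ℝ) :
    degI (setVar h c P) i ≤ degI P i := by
  refine degI_le_iff.mpr fun m hm hmi => ?_
  obtain ⟨m', hm', rfl⟩ := exists_erase_eq_of_mem_support_setVar hm
  rw [Finsupp.erase_ne hih] at hmi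
  exact (Finsupp.degree_mono (fun j => by rw [Finsupp.erase_apply]; split_ifs <;> simp)).trans
    (degree_le_degI hm' hmi)

section Elimination

variable {P : MvPolynomial (Fin n) ℝ} {h i : Fin n} {c c' : ℝ}

theorem IsMultilinear.coeff_setVar_of_degI_setVar_eq_zero (hP : IsMultilinear P)
    (h' : degI (setVar h c' P) i = 0) {m : Fin n →₀ ℕ} (hmh : m h = 0) (hmi : m i ≠ 0) :
    (setVar h c P).coeff m = (c - c') * P.coeff (m + Finsupp.single h 1) := by
  have hm' : (setVar h c' P).coeff m = 0 :=
    notMem_support_iff.mp fun hm => hmi (degI_eq_zero_iff.mp h' m hm)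
  rw [hP.coeff_setVar h c' hmh] at hm'
  rw [hP.coeff_setVar h c hmh]
  linear_combination hm'

/- Once `x i` has disappeared from `P` at `x h = c'`, every monomial of `P` at `x h = c` containing
`x i` is what is left of a monomial of `P` divisible by `x h`, of degree one more. -/
theorem IsMultilinear.degI_setVar_lt (hP : IsMultilinear P) (hih : i ≠ h)
    (h' : degI (setVar h c' P) i = 0) (hPi : degI P i ≠ 0) :
    degI (setVar h c P) i < degI P i := by
  suffices degI (setVar h c P) i ≤ degI P i - 1 by omega
  refine degI_le_iff.mpr fun m hm hmi => ?_
  obtain ⟨m', -, rfl⟩ := exists_erase_eq_of_mem_support_setVar hm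
  have hcoeff := hP.coeff_setVar_of_degI_setVar_eq_zero (c := c) h' Finsupp.erase_same hmi
  have hmem : m'.erase h + Finsupp.single h 1 ∈ P.support := by
    rw [mem_support_iff]
    intro hz
    rw [hz, mul_zero] at hcoeff
    exact mem_support_iff.mp hm hcoeff
  have := degree_le_degI hmem (by
    rwa [Finsupp.add_apply, Finsupp.single_apply, if_neg hih.symm, add_zero])
  simp only [map_add, Finsupp.degree_single] at this
  omega

theorem IsMultilinear.degI_setVar_ne_zero (hP : IsMultilinear P) (hih : i ≠ h) (hc : c ≠ c')
    (h' : degI (setVar h c' P) i = 0) (hPi : degI P i ≠ 0) :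
    degI (setVar h c P) i ≠ 0 := by
  obtain ⟨m, hm, hmi⟩ : ∃ m ∈ P.support, m i ≠ 0 := by
    simpa [degI_eq_zero_iff] using hPi
  have hmi' : m.erase h i ≠ 0 := by rwa [Finsupp.erase_ne hih]
  have hcoeff := hP.coeff_setVar_of_degI_setVar_eq_zero (c := c) h' Finsupp.erase_same hmi'
  suffices P.coeff (m.erase h + Finsupp.single h 1) ≠ 0 by
    refine fun hz => hmi' (degI_eq_zero_iff.mp hz _ (mem_support_iff.mpr ?_))
    rw [hcoeff]
    exact mul_ne_zero (sub_ne_zero.mpr hc) this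
  rcases Nat.le_one_iff_eq_zero_or_eq_one.mp (hP m hm h) with hmh | hmh
  · have hm' := hP.coeff_setVar_of_degI_setVar_eq_zero (c := c') h' hmh hmi
    rw [hP.coeff_setVar h c' hmh, sub_self, zero_mul] at hm'
    rw [Finsupp.erase_of_notMem_support (by simpa using hmh)]
    intro hz
    rw [hz, mul_zero, add_zero] at hm'
    exact mem_support_iff.mp hm hm'
  · rw [← hmh, Finsupp.erase_add_single]
    exact mem_support_iff.mp hm

end Elimination

end DegI

section Relevance

variable {n : ℕ} {P : MvPolynomial (Fin n) ℝ} {f : (Fin n → Bool) → Bool}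

theorem bval_injective : Function.Injective bval := by
  intro a b h
  cases a <;> cases b <;> simp_all [bval]

theorem Represents.isMultilinear (hP : Represents P f) : IsMultilinear P :=
  hP.1

theorem represents_setVar (hP : Represents P f) (h : Fin n) (b : Bool) :
    Represents (setVar h (bval b) P) (fun x => f (Function.update x h b)) := by
  refine ⟨isMultilinear_setVar hP.isMultilinear h _, fun x => ?_⟩
  have hx : Function.update (fun j => bval (x j)) h (bval b) =
      fun j => bval (Function.update x h b j) :=
    funext fun j => (Function.apply_update (fun _ => bval) x h b j).symm
  rw [eval_setVar, hx, hP.2]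

theorem Represents.relevant_iff (hP : Represents P f) (i : Fin n) :
    Relevant f i ↔ degI P i ≠ 0 := by
  have hrep := represents_setVar hP i
  constructor
  · rintro ⟨x, hx⟩ hPi
    have hupd (b : Bool) : f (Function.update x i b) = f x := bval_injective <| by
      rw [← (hrep b).2, setVar_eq_self _ (degI_eq_zero_iff.mp hPi), hP.2]
    exact hx (by rw [flip1, hupd])
  · intro hPi
    by_contra hirr
    obtain ⟨m, hm, hmi⟩ : ∃ m ∈ P.support, m i ≠ 0 := by
      simpa [degI_eq_zero_iff] using hPi
    have hflip (x : Fin n → Bool) :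
        f (Function.update x i true) = f (Function.update x i false) := by
      by_contra hne
      refine hirr ⟨Function.update x i false, ?_⟩
      simpa [flip1] using hne
    have heq := (hrep true).isMultilinear.eq_of_eval_bool_eq (hrep false).isMultilinear fun x => by
      rw [(hrep true).2, (hrep false).2]
      exact congrArg bval (hflip x)
    have hcoeff := congr(($heq).coeff (m.erase i))
    have hmi1 : m i = 1 := by have := hP.isMultilinear m hm i; omega
    rw [hP.isMultilinear.coeff_setVar i _ Finsupp.erase_same,
      hP.isMultilinear.coeff_setVar i _ Finsupp.erase_same, ← hmi1, Finsupp.erase_add_single]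
      at hcoeff
    exact mem_support_iff.mp hm (by simpa [bval] using hcoeff)

end Relevance

-- The summand of `W`; weight `0` at degree `0` accounts for the irrelevant coordinates.
noncomputable def degWeight (k : ℕ) : ℝ :=
  if k = 0 then 0 else (2 ^ k)⁻¹

theorem degWeight_nonneg (k : ℕ) : 0 ≤ degWeight k := by
  unfold degWeight
  split_ifs <;> positivity

theorem degWeight_le (k : ℕ) : degWeight k ≤ (2 ^ k)⁻¹ := by
  unfold degWeight
  split_ifs <;> simp

theorem degWeight_anti {a b : ℕ} (hb : b ≠ 0) (hab : b ≤ a) : degWeight a ≤ degWeight b := by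
  rw [degWeight, degWeight, if_neg hb, if_neg (by omega)]
  exact inv_anti₀ (by positivity) (pow_le_pow_right₀ one_le_two hab)

theorem two_mul_degWeight_le {a b : ℕ} (hb : b ≠ 0) (hab : b < a) :
    2 * degWeight a ≤ degWeight b := by
  have := degWeight_anti (Nat.succ_ne_zero b) hab
  rw [degWeight, degWeight, if_neg hb, if_neg (Nat.succ_ne_zero b), pow_succ, mul_inv] at *
  linarith

theorem Represents.W_eq_sum_degWeight {n : ℕ} {P : MvPolynomial (Fin n) ℝ}
    {f : (Fin n → Bool) → Bool} (hP : Represents P f) : W P f = ∑ i, degWeight (degI P i) := by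
  simp only [W, relSet, Finset.sum_filter, hP.relevant_iff, degWeight, ite_not]

theorem IsMultilinear.two_mul_degWeight_le_setVar {n : ℕ} {P : MvPolynomial (Fin n) ℝ}
    (hP : IsMultilinear P) {h i : Fin n} (hih : i ≠ h) {c₀ c₁ : ℝ} (hc : c₀ ≠ c₁) :
    2 * degWeight (degI P i) ≤
      degWeight (degI (setVar h c₀ P) i) + degWeight (degI (setVar h c₁ P) i) := by
  have h₀ := degWeight_nonneg (degI (setVar h c₀ P) i)
  have h₁ := degWeight_nonneg (degI (setVar h c₁ P) i)
  by_cases hPi : degI P i = 0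
  · rw [hPi, degWeight, if_pos rfl]
    linarith
  by_cases hd₀ : degI (setVar h c₀ P) i = 0
  · linarith [two_mul_degWeight_le (hP.degI_setVar_ne_zero hih hc.symm hd₀ hPi)
      (hP.degI_setVar_lt hih hd₀ hPi)]
  by_cases hd₁ : degI (setVar h c₁ P) i = 0
  · linarith [two_mul_degWeight_le (hP.degI_setVar_ne_zero hih hc hd₁ hPi)
      (hP.degI_setVar_lt hih hd₁ hPi)]
  linarith [degWeight_anti hd₀ (degI_setVar_le hih c₀), degWeight_anti hd₁ (degI_setVar_le hih c₁)]

section Restriction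

variable {n : ℕ}

theorem sum_extendH_insert {M : Type*} [AddCommMonoid M] {h : Fin n} {s : Finset (Fin n)}
    (hhs : h ∉ s) (G : (Fin n → Bool) → M) :
    ∑ α : {i // i ∈ insert h s} → Bool, G (extendH (insert h s) α) =
      ∑ b : Bool, ∑ β : {i // i ∈ s} → Bool, G (Function.update (extendH s β) h b) := by
  let e : Bool × ({i // i ∈ s} → Bool) ≃ ({i // i ∈ insert h s} → Bool) :=
    { toFun := fun p j => Function.update (extendH s p.2) h p.1 j
      invFun := fun α => (α ⟨h, mem_insert_self h s⟩, fun j => α ⟨j, mem_insert_of_mem j.2⟩)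
      left_inv := fun p => by
        ext j
        · simp
        · simp [extendH, Function.update_of_ne (ne_of_mem_of_not_mem j.2 hhs)]
      right_inv := fun α => by
        funext ⟨j, hj⟩
        rcases eq_or_ne j h with rfl | hjh
        · simp
        · simp [hjh, extendH, (mem_insert.mp hj).resolve_left hjh] }
  rw [← Fintype.sum_prod_type', ← e.sum_comp]
  refine Fintype.sum_congr _ _ fun p => congrArg G (funext fun i => ?_)
  by_cases hi : i ∈ insert h s
  · simp [e, extendH, hi]
  · have hih : i ≠ h := fun hih => hi (hih ▸ mem_insert_self h s)
    simp [extendH, hi, hih, (not_or.mp (mem_insert.not.mp hi)).2]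

theorem restrict_insert_update (f : (Fin n → Bool) → Bool) (h : Fin n) (s : Finset (Fin n))
    (a : Fin n → Bool) (b : Bool) :
    restrict f (insert h s) (Function.update a h b) =
      restrict (fun x => f (Function.update x h b)) s a := by
  funext x
  simp only [_root_.restrict]
  congr 1
  funext i
  rcases eq_or_ne i h with rfl | hih
  · simp
  · simp [hih]

theorem sum_compl_degWeight_le (H : Finset (Fin n)) (f : (Fin n → Bool) → Bool)
    (P : MvPolynomial (Fin n) ℝ) (hP : Represents P f) (Q : (Fin n → Bool) → MvPolynomial (Fin n) ℝ)
    (hQ : ∀ a, Represents (Q a) (restrict f H a)) :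
    ∑ i ∈ Hᶜ, degWeight (degI P i) ≤
      (2 ^ H.card)⁻¹ * ∑ α : {i // i ∈ H} → Bool, ∑ i, degWeight (degI (Q (extendH H α)) i) := by
  induction H using Finset.induction_on generalizing f P Q with
  | empty =>
    have hQP (a : Fin n → Bool) : Q a = P :=
      (hQ a).isMultilinear.eq_of_eval_bool_eq hP.isMultilinear fun x => by
        rw [(hQ a).2, hP.2]
        rfl
    simp [hQP]
  | @insert h s hhs ih =>
    have hPb (b : Bool) := represents_setVar hP h b
    have hQb (b : Bool) (a : Fin n → Bool) :
        Represents (Q (Function.update a h b))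
          (restrict (fun x => f (Function.update x h b)) s a) :=
      restrict_insert_update f h s a b ▸ hQ _
    have hpoint : ∀ i ∈ (insert h s)ᶜ, 2 * degWeight (degI P i) ≤
        ∑ b : Bool, degWeight (degI (setVar h (bval b) P) i) := fun i hi => by
      have hih : i ≠ h := by rintro rfl; exact mem_compl.mp hi (mem_insert_self i s)
      rw [Fintype.sum_bool, add_comm]
      exact hP.isMultilinear.two_mul_degWeight_le_setVar hih (by simp [bval])
    have hstep : 2 * ∑ i ∈ (insert h s)ᶜ, degWeight (degI P i) ≤
        ∑ b : Bool, ∑ i ∈ sᶜ, degWeight (degI (setVar h (bval b) P) i) :=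
      calc 2 * ∑ i ∈ (insert h s)ᶜ, degWeight (degI P i)
          ≤ ∑ b : Bool, ∑ i ∈ (insert h s)ᶜ, degWeight (degI (setVar h (bval b) P) i) := by
            rw [mul_sum, sum_comm]
            exact sum_le_sum hpoint
        _ ≤ _ := by
            gcongr with b
            · exact fun i _ _ => degWeight_nonneg _
            · exact subset_insert h s
    have hIH (b : Bool) := ih _ _ (hPb b) _ (hQb b)
    rw [sum_extendH_insert hhs (fun a => ∑ i, degWeight (degI (Q a) i)), card_insert_of_notMem hhs,
      pow_succ, mul_inv]
    have hIH' := sum_le_sum fun b (_ : b ∈ univ) => hIH b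
    rw [← mul_sum] at hIH'
    linarith

theorem restrict_extendH (f : (Fin n → Bool) → Bool) (H : Finset (Fin n)) (a : Fin n → Bool) :
    restrict f H (extendH H fun i => a i) = restrict f H a := by
  funext x
  simp +contextual [_root_.restrict, extendH]

end Restriction

theorem stmt_4_general {n : ℕ} (f : (Fin n → Bool) → Bool) (P : MvPolynomial (Fin n) ℝ)
    (hP : Represents P f) (d : ℕ)
    (H : Finset (Fin n)) (hH : ∀ i ∈ H, degI P i = d)
    (Q : ({i // i ∈ H} → Bool) → MvPolynomial (Fin n) ℝ)
    (hQ : ∀ α, Represents (Q α) (restrict f H (extendH H α))) :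
    W P f ≤ (H.card : ℝ) * ((2:ℝ) ^ d)⁻¹ +
      ((2:ℝ) ^ H.card)⁻¹ *
        ∑ α : {i // i ∈ H} → Bool, W (Q α) (restrict f H (extendH H α)) := by
  have hH_part : ∑ i ∈ H, degWeight (degI P i) ≤ H.card * ((2:ℝ) ^ d)⁻¹ :=
    calc ∑ i ∈ H, degWeight (degI P i)
        ≤ ∑ _i ∈ H, ((2:ℝ) ^ d)⁻¹ := sum_le_sum fun i hi => by rw [← hH i hi]; exact degWeight_le _
      _ = H.card * ((2:ℝ) ^ d)⁻¹ := by rw [sum_const, nsmul_eq_mul]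
  have hQ_ext (a : Fin n → Bool) : Represents (Q fun i => a i) (restrict f H a) :=
    restrict_extendH f H a ▸ hQ _
  have hcompl_part := sum_compl_degWeight_le H f P hP _ hQ_ext
  have hQ_extendH (α : {i // i ∈ H} → Bool) : (Q fun i => extendH H α i) = Q α :=
    congrArg Q (funext fun i => dif_pos i.2)
  simp only [hQ_extendH] at hcompl_part
  rw [hP.W_eq_sum_degWeight, ← sum_add_sum_compl H]
  simp only [fun α => (hQ α).W_eq_sum_degWeight]
  linarith

/-- if every `i ∈ H` has `deg_i(f) = deg(f) = d`, then
`W(f) ≤ |H|·2^{-d} + 2^{-|H|} Σ_{α : H → {0,1}} W(f_α)`. -/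
theorem stmt_4 {n : ℕ} (f : (Fin n → Bool) → Bool) (P : MvPolynomial (Fin n) ℝ)
    (hP : Represents P f) (d : ℕ) (hd : P.totalDegree = d)
    (H : Finset (Fin n)) (hH : ∀ i ∈ H, degI P i = d)
    (Q : ({i // i ∈ H} → Bool) → MvPolynomial (Fin n) ℝ)
    (hQ : ∀ α, Represents (Q α) (restrict f H (extendH H α))) :
    W P f ≤ (H.card : ℝ) * ((2:ℝ) ^ d)⁻¹ +
      ((2:ℝ) ^ H.card)⁻¹ *
        ∑ α : {i // i ∈ H} → Bool, W (Q α) (restrict f H (extendH H α)) :=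
  stmt_4_general f P hP d H hH Q hQ
end

section
/- If f : {0,1}^n → {0,1} contains ℓ pairwise disjoint monomials M_1,…,M_ℓ each of degree d = deg(f) (with nonzero coefficients), then for any assignment α to the variables in ∪M_i, the restricted function f_α satisfies bs(f_α) ≤ bs(f) − ℓ. In particular ℓ ≤ bs(f). -/
open MvPolynomial Finset
open scoped Classical

lemma monOf_apply {n : ℕ} (S : Finset (Fin n)) (i : Fin n) :
    monOf S i = if i ∈ S then 1 else 0 := by
  classical
  rw [monOf, Finset.sum_apply']
  simp [Finsupp.single_apply]

lemma monOf_support {n : ℕ} (S : Finset (Fin n)) : (monOf S).support = S := by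
  ext i
  simp [Finsupp.mem_support_iff, monOf_apply]

lemma eq_monOf {n : ℕ} (m : Fin n →₀ ℕ) (hm : ∀ i, m i ≤ 1) (S : Finset (Fin n))
    (hS : m.support = S) : m = monOf S := by
  ext i
  rw [monOf_apply]
  by_cases hi : i ∈ S
  · rw [if_pos hi]
    have h0 : m i ≠ 0 := Finsupp.mem_support_iff.mp (hS ▸ hi)
    have h1 := hm i
    omega
  · have : ¬ m i ≠ 0 := fun h => hi (hS ▸ Finsupp.mem_support_iff.mpr h)
    simp at this
    simp [this, hi]

lemma indic_prod {α : Type*} [DecidableEq α] (A T : Finset α) :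
    (∏ i ∈ A, (if i ∈ T then (1:ℝ) else 0)) = if A ⊆ T then 1 else 0 := by
  split_ifs with h
  · exact Finset.prod_eq_one fun i hi => by simp [h hi]
  · obtain ⟨i, hiA, hiT⟩ := Finset.not_subset.mp h
    exact Finset.prod_eq_zero hiA (by simp [hiT])

lemma mobius {α : Type*} [DecidableEq α] (S A : Finset α) (hA : A ⊆ S) :
    ∑ T ∈ S.powerset, (-1:ℝ)^((S \ T).card) * (if A ⊆ T then 1 else 0)
      = if A = S then 1 else 0 := by
  have h := Finset.prod_add (fun _ : α => (1:ℝ)) (fun i => if i ∈ A then 0 else -1) S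
  have hL : ∏ i ∈ S, ((1:ℝ) + if i ∈ A then 0 else -1) = if A = S then 1 else 0 := by
    by_cases hAS : A = S
    · subst hAS
      rw [if_pos rfl]
      exact Finset.prod_eq_one fun i hi => by simp [hi]
    · rw [if_neg hAS]
      obtain ⟨i, hiS, hiA⟩ : ∃ i ∈ S, i ∉ A := by
        by_contra hc
        push_neg at hc
        exact hAS (Finset.Subset.antisymm hA hc)
      exact Finset.prod_eq_zero hiS (by simp [hiA])
  have hR : ∀ T ∈ S.powerset, (∏ _i ∈ T, (1:ℝ)) * ∏ i ∈ S \ T, (if i ∈ A then 0 else -1)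
      = (-1:ℝ)^((S \ T).card) * (if A ⊆ T then 1 else 0) := by
    intro T hT
    rw [Finset.prod_const_one, one_mul]
    by_cases hAT : A ⊆ T
    · rw [if_pos hAT, mul_one]
      calc ∏ i ∈ S \ T, (if i ∈ A then (0:ℝ) else -1)
          = ∏ _i ∈ S \ T, (-1:ℝ) :=
            Finset.prod_congr rfl fun i hi =>
              if_neg fun h => (Finset.mem_sdiff.mp hi).2 (hAT h)
        _ = (-1:ℝ)^((S \ T).card) := Finset.prod_const _
    · rw [if_neg hAT, mul_zero]
      obtain ⟨i, hiA, hiT⟩ := Finset.not_subset.mp hAT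
      exact Finset.prod_eq_zero (Finset.mem_sdiff.mpr ⟨hA hiA, hiT⟩) (by simp [hiA])
  calc ∑ T ∈ S.powerset, (-1:ℝ)^((S \ T).card) * (if A ⊆ T then 1 else 0)
      = ∑ T ∈ S.powerset, (∏ _i ∈ T, (1:ℝ)) * ∏ i ∈ S \ T, (if i ∈ A then 0 else -1) :=
        (Finset.sum_congr rfl hR).symm
    _ = ∏ i ∈ S, ((1:ℝ) + if i ∈ A then 0 else -1) := h.symm
    _ = if A = S then 1 else 0 := hL

lemma key {n : ℕ} (P : MvPolynomial (Fin n) ℝ) (d : ℕ)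
    (hmul : ∀ m ∈ P.support, ∀ i, m i ≤ 1) (htd : P.totalDegree = d)
    (S : Finset (Fin n)) (hS : S.card = d) (x : Fin n → Bool) :
    ∑ T ∈ S.powerset, (-1:ℝ)^((S \ T).card) *
      MvPolynomial.eval (fun i => if i ∈ S then (if i ∈ T then (1:ℝ) else 0) else bval (x i)) P
      = P.coeff (monOf S) := by
  classical
  have h1 : ∀ T ∈ S.powerset, (-1:ℝ)^((S \ T).card) *
      MvPolynomial.eval (fun i => if i ∈ S then (if i ∈ T then (1:ℝ) else 0) else bval (x i)) P
      = ∑ m ∈ P.support, P.coeff m *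
          ((∏ i ∈ m.support.filter (fun i => ¬ i ∈ S), bval (x i)) *
           ((-1:ℝ)^((S \ T).card) * if m.support.filter (fun i => i ∈ S) ⊆ T then 1 else 0)) := by
    intro T hT
    rw [MvPolynomial.eval_eq, Finset.mul_sum]
    refine Finset.sum_congr rfl fun m hm => ?_
    have hpow : ∀ i ∈ m.support,
        ((if i ∈ S then (if i ∈ T then (1:ℝ) else 0) else bval (x i)) ^ m i)
        = (if i ∈ S then (if i ∈ T then (1:ℝ) else 0) else bval (x i)) := by
      intro i hi
      have h1 : m i = 1 :=
        le_antisymm (hmul m hm i) (Nat.one_le_iff_ne_zero.mpr (Finsupp.mem_support_iff.mp hi))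
      rw [h1, pow_one]
    rw [Finset.prod_congr rfl hpow,
        ← Finset.prod_filter_mul_prod_filter_not m.support (fun i => i ∈ S)]
    have hA : (∏ i ∈ m.support.filter (fun i => i ∈ S),
        (if i ∈ S then (if i ∈ T then (1:ℝ) else 0) else bval (x i)))
        = if m.support.filter (fun i => i ∈ S) ⊆ T then 1 else 0 := by
      rw [← indic_prod (m.support.filter (fun i => i ∈ S)) T]
      exact Finset.prod_congr rfl fun i hi => if_pos (Finset.mem_filter.mp hi).2
    have hB : (∏ i ∈ m.support.filter (fun i => ¬ i ∈ S),
        (if i ∈ S then (if i ∈ T then (1:ℝ) else 0) else bval (x i)))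
        = ∏ i ∈ m.support.filter (fun i => ¬ i ∈ S), bval (x i) :=
      Finset.prod_congr rfl fun i hi => if_neg (Finset.mem_filter.mp hi).2
    rw [hA, hB]
    ring
  rw [Finset.sum_congr rfl h1, Finset.sum_comm]
  have h2 : ∀ m ∈ P.support,
      (∑ T ∈ S.powerset, P.coeff m *
        ((∏ i ∈ m.support.filter (fun i => ¬ i ∈ S), bval (x i)) *
         ((-1:ℝ)^((S \ T).card) * if m.support.filter (fun i => i ∈ S) ⊆ T then 1 else 0)))
      = if m = monOf S then P.coeff (monOf S) else 0 := by
    intro m hm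
    have hAsub : m.support.filter (fun i => i ∈ S) ⊆ S :=
      fun i hi => (Finset.mem_filter.mp hi).2
    rw [← Finset.mul_sum, ← Finset.mul_sum, mobius S _ hAsub]
    by_cases hms : m = monOf S
    · subst hms
      rw [if_pos rfl]
      have hsupp : (monOf S).support = S := monOf_support S
      have e1 : (monOf S).support.filter (fun i => i ∈ S) = S := by
        rw [hsupp]; exact Finset.filter_true_of_mem fun i hi => hi
      have e2 : (monOf S).support.filter (fun i => ¬ i ∈ S) = ∅ := by
        rw [hsupp]; exact Finset.filter_false_of_mem fun i hi h => h hi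
      rw [e1, e2, if_pos rfl]
      simp
    · rw [if_neg hms]
      have hne : m.support.filter (fun i => i ∈ S) ≠ S := by
        intro hAS
        apply hms
        have hsub : S ⊆ m.support := hAS ▸ Finset.filter_subset _ _
        have hc1 : m.support.card ≤ m.sum fun _ e => e := by
          rw [Finsupp.sum]
          calc m.support.card = ∑ _i ∈ m.support, 1 := by simp
            _ ≤ ∑ i ∈ m.support, m i :=
              Finset.sum_le_sum fun i hi =>
                Nat.one_le_iff_ne_zero.mpr (Finsupp.mem_support_iff.mp hi)
        have hc2 : (m.sum fun _ e => e) ≤ d := htd ▸ MvPolynomial.le_totalDegree hm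
        have hms' : m.support = S :=
          (Finset.eq_of_subset_of_card_le hsub (by omega)).symm
        exact eq_monOf m (hmul m hm) S hms'
      rw [if_neg hne]
      simp
  rw [Finset.sum_congr rfl h2, Finset.sum_ite_eq' P.support (monOf S)]
  split_ifs with h
  · rfl
  · exact (MvPolynomial.notMem_support_iff.mp h).symm

lemma exists_flip {n : ℕ} (f : (Fin n → Bool) → Bool) (P : MvPolynomial (Fin n) ℝ)
    (hP : Represents P f) (d : ℕ) (htd : P.totalDegree = d) (hd1 : 1 ≤ d)
    (S : Finset (Fin n)) (hS : S.card = d) (hcoeff : P.coeff (monOf S) ≠ 0)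
    (x : Fin n → Bool) : ∃ C, C ⊆ S ∧ f (flipB x C) ≠ f x := by
  classical
  by_contra hcon
  push_neg at hcon
  have hkey := key P d hP.1 htd S hS x
  have hterm : ∀ T ∈ S.powerset,
      MvPolynomial.eval (fun i => if i ∈ S then (if i ∈ T then (1:ℝ) else 0) else bval (x i)) P
      = bval (f x) := by
    intro T hT
    set C : Finset (Fin n) := S.filter (fun i => x i ≠ decide (i ∈ T)) with hC
    have hCS : C ⊆ S := Finset.filter_subset _ _
    have hpt : (fun i => if i ∈ S then (if i ∈ T then (1:ℝ) else 0) else bval (x i))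
        = fun i => bval (flipB x C i) := by
      funext i
      by_cases hiS : i ∈ S
      · rw [if_pos hiS]
        by_cases hdif : x i ≠ decide (i ∈ T)
        · have hiC : i ∈ C := Finset.mem_filter.mpr ⟨hiS, hdif⟩
          simp only [flipB, if_pos hiC]
          cases hxi : x i <;> by_cases hiT : i ∈ T <;>
            simp_all [bval]
        · have hiC : i ∉ C := fun h => hdif (Finset.mem_filter.mp h).2
          simp only [flipB, if_neg hiC]
          push_neg at hdif
          cases hxi : x i <;> by_cases hiT : i ∈ T <;>
            simp_all [bval]
      · have hiC : i ∉ C := fun h => hiS (hCS h)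
        simp only [flipB, if_neg hiS, if_neg hiC]
    rw [hpt, hP.2, hcon C hCS]
  rw [Finset.sum_congr rfl (fun T hT => by rw [hterm T hT])] at hkey
  rw [← Finset.sum_mul] at hkey
  have hzero : ∑ T ∈ S.powerset, (-1:ℝ)^((S \ T).card) = 0 := by
    have := mobius S ∅ (Finset.empty_subset S)
    have hSne : (∅ : Finset (Fin n)) ≠ S := by
      intro h
      have : S.card = 0 := by rw [← h]; rfl
      omega
    simpa [hSne] using this
  rw [hzero, zero_mul] at hkey
  exact hcoeff hkey.symm

lemma hasSens_zero {n : ℕ} (f : (Fin n → Bool) → Bool) : HasSensBlocks f 0 :=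
  ⟨fun _ => false, fun j => j.elim0, fun j => j.elim0, fun j => j.elim0⟩

lemma hasSens_le {n : ℕ} {f : (Fin n → Bool) → Bool} {b : ℕ}
    (h : HasSensBlocks f b) : b ≤ n := by
  classical
  obtain ⟨x, B, hdisj, hsens⟩ := h
  have hne : ∀ j, (B j).Nonempty := by
    intro j
    rcases (B j).eq_empty_or_nonempty with h | h
    · exfalso
      apply hsens j
      congr 1
      funext i
      simp [flipB, h]
    · exact h
  calc b = ∑ _j : Fin b, 1 := by simp
    _ ≤ ∑ j : Fin b, (B j).card := Finset.sum_le_sum fun j _ => (hne j).card_pos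
    _ = (Finset.univ.biUnion B).card :=
        (Finset.card_biUnion fun j _ k _ hjk => hdisj j k hjk).symm
    _ ≤ n := by simpa using Finset.card_le_univ (Finset.univ.biUnion B)

lemma bs_mem {n : ℕ} (f : (Fin n → Bool) → Bool) : HasSensBlocks f (bs f) := by
  have h1 : ({b | HasSensBlocks f b} : Set ℕ).Nonempty := ⟨0, hasSens_zero f⟩
  have h2 : BddAbove ({b | HasSensBlocks f b} : Set ℕ) := ⟨n, fun b hb => hasSens_le hb⟩
  exact Nat.sSup_mem h1 h2

lemma le_bs {n : ℕ} {f : (Fin n → Bool) → Bool} {b : ℕ}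
    (h : HasSensBlocks f b) : b ≤ bs f := by
  have h2 : BddAbove ({b | HasSensBlocks f b} : Set ℕ) := ⟨n, fun b hb => hasSens_le hb⟩
  exact le_csSup h2 h

/-- if `f` has `ℓ` pairwise disjoint monomials of full degree `d = deg f`,
then `ℓ ≤ bs(f)`, and any restriction of the variables of these monomials has
`bs(f_α) ≤ bs(f) - ℓ`. -/
theorem stmt_5 {n : ℕ} (f : (Fin n → Bool) → Bool) (P : MvPolynomial (Fin n) ℝ)
    (hP : Represents P f) (d : ℕ) (hd : P.totalDegree = d) (hd1 : 1 ≤ d)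
    (ℓ : ℕ) (M : Fin ℓ → Finset (Fin n))
    (hdisj : ∀ j k, j ≠ k → Disjoint (M j) (M k))
    (hcard : ∀ j, (M j).card = d)
    (hmon : ∀ j, P.coeff (monOf (M j)) ≠ 0) :
    ℓ ≤ bs f ∧
      ∀ α : Fin n → Bool, bs (restrict f (Finset.univ.biUnion M) α) + ℓ ≤ bs f := by
  classical
  have hMH : ∀ j, M j ⊆ Finset.univ.biUnion M :=
    fun j => Finset.subset_biUnion_of_mem M (Finset.mem_univ j)
  have main : ∀ α : Fin n → Bool,
      bs (restrict f (Finset.univ.biUnion M) α) + ℓ ≤ bs f := by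
    intro α
    set H := Finset.univ.biUnion M with hH
    set g := _root_.restrict f H α with hg
    set b := bs g with hb
    obtain ⟨x, B, hBdisj, hBsens⟩ : HasSensBlocks g b := bs_mem g
    set x' : Fin n → Bool := fun i => if i ∈ H then α i else x i with hx'
    have hgeval : ∀ C : Finset (Fin n), (∀ i ∈ C, i ∉ H) →
        g (flipB x C) = f (flipB x' C) := by
      intro C hC
      rw [hg]
      show f _ = f _
      have hfun : (fun i => if i ∈ H then α i else flipB x C i) = flipB x' C := by
        funext i
        by_cases hiH : i ∈ H
        · have hiC : i ∉ C := fun h => hC i h hiH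
          simp [flipB, hiH, hiC, hx']
        · simp [flipB, hiH, hx']
      rw [hfun]
    have hgx : g x = f x' := by
      rw [hg]
      show f _ = f _
      rfl
    set B' : Fin b → Finset (Fin n) := fun j => B j \ H with hB'
    have hB'sens : ∀ j, f (flipB x' (B' j)) ≠ f x' := by
      intro j hcon
      apply hBsens j
      have e1 : g (flipB x (B j)) = g (flipB x (B' j)) := by
        rw [hg]
        show f _ = f _
        have hfun : (fun i => if i ∈ H then α i else flipB x (B j) i)
            = fun i => if i ∈ H then α i else flipB x (B' j) i := by
          funext i
          by_cases hiH : i ∈ H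
          · simp [hiH]
          · simp [hiH, flipB, hB', Finset.mem_sdiff]
        rw [hfun]
      rw [e1, hgeval (B' j) (fun i hi => (Finset.mem_sdiff.mp hi).2), hcon, ← hgx]
    choose C hCsub hCsens using fun j : Fin ℓ =>
      exists_flip f P hP d hd hd1 (M j) (hcard j) (hmon j) x'
    set D : Fin (b + ℓ) → Finset (Fin n) := fun i =>
      if h : (i : ℕ) < b then B' ⟨(i : ℕ), h⟩
      else C ⟨(i : ℕ) - b, by have := i.isLt; omega⟩ with hD
    have hDdisj : ∀ j k, j ≠ k → Disjoint (D j) (D k) := by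
      intro j k hjk
      have hvne : (j : ℕ) ≠ (k : ℕ) := fun h => hjk (Fin.ext h)
      by_cases hjb : (j : ℕ) < b <;> by_cases hkb : (k : ℕ) < b <;>
        simp only [hD, hjb, hkb, dite_true, dite_false, dif_pos, dif_neg,
          not_false_iff]
      · exact (hBdisj ⟨j, hjb⟩ ⟨k, hkb⟩ (Fin.ne_of_val_ne hvne)).mono
          sdiff_le sdiff_le
      · rw [Finset.disjoint_left]
        intro i hi hiC
        exact (Finset.mem_sdiff.mp hi).2 (hMH _ (hCsub _ hiC))
      · rw [Finset.disjoint_right]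
        intro i hi hiC
        exact (Finset.mem_sdiff.mp hi).2 (hMH _ (hCsub _ hiC))
      · refine (hdisj _ _ ?_).mono (hCsub _) (hCsub _)
        intro h
        have := congrArg Fin.val h
        simp only [Fin.val_mk] at this
        omega
    have hDsens : ∀ j, f (flipB x' (D j)) ≠ f x' := by
      intro j
      by_cases hjb : (j : ℕ) < b
      · simp only [hD, dif_pos hjb]
        exact hB'sens _
      · simp only [hD, dif_neg hjb]
        exact hCsens _
    exact le_bs ⟨x', D, hDdisj, hDsens⟩
  refine ⟨?_, main⟩
  have := main (fun _ => false)
  omega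
end

section
/- If f : {0,1}^n → {0,1} has degree d and M is a maximum-degree monomial of f (a set of size d with nonzero coefficient in its multilinear polynomial), then for every fixing z of the coordinates outside M, the function x ↦ f(x, z) on {0,1}^M is non-constant. -/
open MvPolynomial Finset
open scoped Classical

/-- if `M` is a maximum-degree monomial of `f` (so `|M| = d = deg f`,
nonzero coefficient), then for every fixing `z` of the coordinates outside `M`, the
function on the coordinates in `M` is non-constant. -/
theorem stmt_6 {n : ℕ} (f : (Fin n → Bool) → Bool) (P : MvPolynomial (Fin n) ℝ)
    (hP : Represents P f) (d : ℕ) (hd : P.totalDegree = d) (hd1 : 1 ≤ d)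
    (M : Finset (Fin n)) (hM : M.card = d) (hc : P.coeff (monOf M) ≠ 0) :
    ∀ z : Fin n → Bool, ∃ x y : Fin n → Bool,
      (∀ i, i ∉ M → x i = z i) ∧ (∀ i, i ∉ M → y i = z i) ∧ f x ≠ f y := by
  
  intro z
  by_contra hcon
  push_neg at hcon
  set bpt : Finset (Fin n) → (Fin n → Bool) :=
    fun S i => if i ∈ M then decide (i ∈ S) else z i with hbpt
  have hzout : ∀ S i, i ∉ M → bpt S i = z i := by intro S i hi; simp [hbpt, hi]
  have hfeq : ∀ S, f (bpt S) = f (bpt ∅) := fun S => hcon _ _ (hzout S) (hzout ∅)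
  have hmon : ∀ i, monOf M i = if i ∈ M then 1 else 0 := by
    intro i; simp [monOf, Finsupp.finset_sum_apply, Finsupp.single_apply]
  -- the key identity
  have key : ∑ S ∈ M.powerset, (-1 : ℝ) ^ S.card *
      MvPolynomial.eval (fun i => bval (bpt S i)) P = (-1 : ℝ) ^ d * P.coeff (monOf M) := by
    have hrw : ∀ S ∈ M.powerset, (-1 : ℝ) ^ S.card *
        MvPolynomial.eval (fun i => bval (bpt S i)) P =
        ∑ m ∈ P.support, P.coeff m *
          ((∏ i ∈ S, (-1 : ℝ)) * ∏ i ∈ M \ S, (0 : ℝ) ^ m i) *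
          ∏ i ∈ Mᶜ, bval (z i) ^ m i := by
      intro S hS
      rw [Finset.mem_powerset] at hS
      rw [eval_eq', Finset.mul_sum]
      refine Finset.sum_congr rfl fun m _ => ?_
      have hprod : (∏ i, bval (bpt S i) ^ m i) =
          (∏ i ∈ M, bval (bpt S i) ^ m i) * ∏ i ∈ Mᶜ, bval (bpt S i) ^ m i :=
        (Finset.prod_mul_prod_compl M _).symm
      have h1 : (∏ i ∈ Mᶜ, bval (bpt S i) ^ m i) = ∏ i ∈ Mᶜ, bval (z i) ^ m i := by
        refine Finset.prod_congr rfl fun i hi => ?_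
        rw [hzout S i (Finset.mem_compl.mp hi)]
      have h2 : (∏ i ∈ M, bval (bpt S i) ^ m i) = ∏ i ∈ M \ S, (0 : ℝ) ^ m i := by
        rw [← Finset.prod_sdiff hS]
        have : (∏ i ∈ S, bval (bpt S i) ^ m i) = 1 := by
          refine Finset.prod_eq_one fun i hi => ?_
          have : bpt S i = true := by simp [hbpt, hS hi, hi]
          simp [this, bval]
        rw [this, mul_one]
        refine Finset.prod_congr rfl fun i hi => ?_
        have hiS := (Finset.mem_sdiff.mp hi).2
        have : bpt S i = false := by simp [hbpt, (Finset.mem_sdiff.mp hi).1, hiS]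
        simp [this, bval]
      have h3 : (-1 : ℝ) ^ S.card = ∏ i ∈ S, (-1 : ℝ) := by
        rw [Finset.prod_const]
      rw [hprod, h1, h2, h3]; ring
    rw [Finset.sum_congr rfl hrw, Finset.sum_comm]
    have hinner : ∀ m ∈ P.support,
        (∑ S ∈ M.powerset, P.coeff m *
          ((∏ i ∈ S, (-1 : ℝ)) * ∏ i ∈ M \ S, (0 : ℝ) ^ m i) * ∏ i ∈ Mᶜ, bval (z i) ^ m i)
        = P.coeff m * (∏ i ∈ M, ((-1 : ℝ) + (0 : ℝ) ^ m i)) * ∏ i ∈ Mᶜ, bval (z i) ^ m i := by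
      intro m _
      rw [Finset.prod_add, Finset.mul_sum, Finset.sum_mul]
    rw [Finset.sum_congr rfl hinner]
    rw [Finset.sum_eq_single (monOf M)]
    · have e1 : (∏ i ∈ M, ((-1 : ℝ) + (0 : ℝ) ^ monOf M i)) = (-1 : ℝ) ^ d := by
        rw [← hM, ← Finset.prod_const]
        refine Finset.prod_congr rfl fun i hi => ?_
        rw [hmon i, if_pos hi]; norm_num
      have e2 : (∏ i ∈ Mᶜ, bval (z i) ^ monOf M i) = 1 := by
        refine Finset.prod_eq_one fun i hi => ?_
        rw [hmon i, if_neg (Finset.mem_compl.mp hi)]; simp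
      rw [e1, e2]; ring
    · intro m hm hne
      by_cases h0 : ∃ i ∈ M, m i = 0
      · obtain ⟨i, hiM, hi0⟩ := h0
        have : ((-1 : ℝ) + (0 : ℝ) ^ m i) = 0 := by rw [hi0]; norm_num
        rw [Finset.prod_eq_zero hiM this]; ring
      · exfalso
        push_neg at h0
        apply hne
        have hle := hP.1 m hm
        have hone : ∀ i ∈ M, m i = 1 := fun i hi =>
          le_antisymm (hle i) (Nat.one_le_iff_ne_zero.mpr (h0 i hi))
        have hsum : (m.sum fun _ e => e) = ∑ i : Fin n, m i :=
          Finsupp.sum_fintype _ _ (fun _ => rfl)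
        have hdeg : (∑ i : Fin n, m i) ≤ d := by
          rw [← hsum, ← hd]; exact le_totalDegree hm
        have hsplit : (∑ i : Fin n, m i) = (∑ i ∈ M, m i) + ∑ i ∈ Mᶜ, m i :=
          (Finset.sum_add_sum_compl M _).symm
        have hMsum : (∑ i ∈ M, m i) = d := by
          rw [Finset.sum_congr rfl hone, Finset.sum_const, smul_eq_mul, mul_one, hM]
        have hout : ∀ i ∈ Mᶜ, m i = 0 := by
          have : (∑ i ∈ Mᶜ, m i) = 0 := by omega
          intro i hi
          exact Finset.sum_eq_zero_iff.mp this i hi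
        ext i
        rw [hmon i]
        by_cases hi : i ∈ M
        · rw [if_pos hi]; exact hone i hi
        · rw [if_neg hi]; exact hout i (Finset.mem_compl.mpr hi)
    · intro h
      exact absurd (MvPolynomial.mem_support_iff.mpr hc) h
  -- but with constancy the LHS is 0
  have hzero : ∑ S ∈ M.powerset, (-1 : ℝ) ^ S.card *
      MvPolynomial.eval (fun i => bval (bpt S i)) P = 0 := by
    have : ∀ S ∈ M.powerset, (-1 : ℝ) ^ S.card *
        MvPolynomial.eval (fun i => bval (bpt S i)) P =
        (-1 : ℝ) ^ S.card * bval (f (bpt ∅)) := by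
      intro S _
      rw [hP.2 (bpt S), hfeq S]
    rw [Finset.sum_congr rfl this, ← Finset.sum_mul]
    have : (∑ S ∈ M.powerset, (-1 : ℝ) ^ S.card) = 0 := by
      have hps := Finset.prod_add (fun _ : Fin n => (-1 : ℝ)) (fun _ => (1 : ℝ)) M
      simp only [Finset.prod_const, Finset.prod_const_one, one_pow, mul_one] at hps
      rw [← hps, hM]
      have h01 : ((-1 : ℝ) + 1) = 0 := by norm_num
      rw [h01, zero_pow (by omega : d ≠ 0)]
    rw [this, zero_mul]
  rw [key] at hzero
  have : P.coeff (monOf M) = 0 := by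
    rcases mul_eq_zero.mp hzero with h | h
    · exact absurd h (pow_ne_zero d (by norm_num))
    · exact h
  exact hc this
end
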